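/- Suppose a group G acts geometrically on two CAT(0) spaces X and Y, let x₀ ∈ X, y₀ ∈ Y, and suppose condition (*) holds. For any sequence {g_i} ⊂ G, if {g_i x₀} is a Cauchy sequence in X ∪ ∂X, then {g_i y₀} is a Cauchy sequence in Y ∪ ∂Y. In fact, with quasi-isometry constants λ, C for the orbit map, one may take M′ = λ(2N+1) + 2M + C: for any R > 0 there is i₀ ∈ ℕ with g_i y₀ ∈ U(g_{i₀} y₀; R, M′) for all i ≥ i₀. -/

import Mathlib

open Metric Set Pointwise

/-- A unit-speed geodesic segment from `x` to `y` in a metric space. -/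
structure GeoSeg (X : Type*) [MetricSpace X] (x y : X) where
  toFun : ℝ → X
  source : toFun 0 = x
  target : toFun (dist x y) = y
  isom : ∀ ⦃s : ℝ⦄, s ∈ Set.Icc 0 (dist x y) → ∀ ⦃t : ℝ⦄, t ∈ Set.Icc 0 (dist x y) →
      dist (toFun s) (toFun t) = |s - t|

/-- A geodesic metric space: any two points are joined by a geodesic segment. -/
def GeodesicSpace (X : Type*) [MetricSpace X] : Prop :=
  ∀ x y : X, Nonempty (GeoSeg X x y)

/-- The point at arclength `s` on the Euclidean segment from `p` to `q`
(the comparison point in the Euclidean plane). -/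
noncomputable def euclPt (p q : EuclideanSpace ℝ (Fin 2)) (s : ℝ) :
    EuclideanSpace ℝ (Fin 2) :=
  p + (s / dist p q) • (q - p)

/-- A geodesic metric space is CAT(0) if every geodesic triangle satisfies the
comparison inequality: for a triangle with vertices `x, y, z`, sides `γ` (from `x` to `y`)
and `δ` (from `x` to `z`), a comparison triangle `x', y', z'` in the Euclidean plane
(same side lengths), and points on the two sides with their Euclidean comparison points,
the distance in `X` is at most the Euclidean distance of the comparison points. -/
def IsCAT0 (X : Type*) [MetricSpace X] : Prop :=
  GeodesicSpace X ∧
  ∀ (x y z : X) (γ : GeoSeg X x y) (δ : GeoSeg X x z)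
    (x' y' z' : EuclideanSpace ℝ (Fin 2)),
    dist x' y' = dist x y → dist x' z' = dist x z → dist y' z' = dist y z →
    ∀ ⦃s : ℝ⦄, s ∈ Set.Icc 0 (dist x y) → ∀ ⦃t : ℝ⦄, t ∈ Set.Icc 0 (dist x z) →
      dist (γ.toFun s) (δ.toFun t) ≤ dist (euclPt x' y' s) (euclPt x' z' t)

/-- A geodesic ray issuing from the basepoint `x₀`. In a proper CAT(0) space each point of
the boundary `∂X` is represented by a unique geodesic ray from `x₀`, so `RayFrom X x₀`
is identified with `∂X`. As a subtype of `ℝ → X` it inherits the topology of pointwise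
convergence, which coincides with the cone topology on `∂X`. -/
abbrev RayFrom (X : Type*) [MetricSpace X] (x₀ : X) : Type _ :=
  {ξ : ℝ → X // ξ 0 = x₀ ∧
    ∀ ⦃s : ℝ⦄, 0 ≤ s → ∀ ⦃t : ℝ⦄, 0 ≤ t → dist (ξ s) (ξ t) = |s - t|}

/-- Two rays (as functions) are asymptotic: the image of one lies in a bounded
neighborhood of the image of the other. -/
def Asymp {X : Type*} [MetricSpace X] (ξ ζ : ℝ → X) : Prop :=
  ∃ N : ℝ, ∀ t : ℝ, 0 ≤ t → ∃ s : ℝ, 0 ≤ s ∧ dist (ξ t) (ζ s) ≤ N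

/-- `x ∈ U(α; r, ε)` for `α` a boundary point given by the ray `ξ` from `x₀`:
`x ∉ B(x₀,r)` and `d(ξ(r), ξ_x(r)) < ε`, where `ξ_x` is the geodesic from `x₀` to `x`
(unique in a CAT(0) space, so we quantify over all of them). -/
def memU {X : Type*} [MetricSpace X] (x₀ : X) (ξ : ℝ → X) (r ε : ℝ) (x : X) : Prop :=
  r < dist x₀ x ∧ ∀ γ : GeoSeg X x₀ x, dist (ξ r) (γ.toFun r) < ε

/-- `x ∈ U(z; r, ε)` for a point `z ∈ X`: `x ∉ B(x₀,r)` and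
`d(ξ_z(r), ξ_x(r)) < ε` for the geodesics `ξ_z, ξ_x` from `x₀`. -/
def memUpt {X : Type*} [MetricSpace X] (x₀ z : X) (r ε : ℝ) (x : X) : Prop :=
  r < dist x₀ x ∧ ∀ γz : GeoSeg X x₀ z, ∀ γ : GeoSeg X x₀ x,
    dist (γz.toFun r) (γ.toFun r) < ε

/-- The sequence `x` is a Cauchy sequence in `X ∪ ∂X`: there is `ε₀ > 0` such that for
every `r > 0` there is `i₀` with `x i ∈ U(x i₀; r, ε₀)` for all `i ≥ i₀`. -/
def ConeCauchy {X : Type*} [MetricSpace X] (x₀ : X) (x : ℕ → X) : Prop :=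
  ∃ ε₀ > (0:ℝ), ∀ r > (0:ℝ), ∃ i₀ : ℕ, ∀ i ≥ i₀, memUpt x₀ (x i₀) r ε₀ (x i)

/-- The sequence `x` converges in `X ∪ ∂X` (cone topology) to the boundary point `α`,
represented by its geodesic ray from `x₀`: it is eventually in every basic
neighborhood `U(α; r, ε)`. -/
def ConvTo {X : Type*} [MetricSpace X] (x₀ : X) (x : ℕ → X) (α : RayFrom X x₀) : Prop :=
  ∀ ε > (0:ℝ), ∀ r > (0:ℝ), ∃ i₀ : ℕ, ∀ i ≥ i₀, memU x₀ α.1 r ε (x i)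

/-- The sequence `x` is unbounded in `X`. -/
def UnboundedSeq {X : Type*} [MetricSpace X] (x₀ : X) (x : ℕ → X) : Prop :=
  ∀ R : ℝ, ∃ i : ℕ, R < dist x₀ (x i)

/-- A geometric action: an action by isometries which is proper and cocompact. -/
def GeometricAction (G X : Type*) [Group G] [MetricSpace X] [MulAction G X] : Prop :=
  (∀ g : G, Isometry fun x : X => g • x) ∧
  (∀ K L : Set X, IsCompact K → IsCompact L → {g : G | (g • K) ∩ L ≠ ∅}.Finite) ∧
  ∃ K : Set X, IsCompact K ∧ ⋃ g : G, g • K = Set.univ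

/-- The geodesic segment `[x, z]` meets the closed ball `B(p, t)`. -/
def SegMeetsBall {X : Type*} [MetricSpace X] (x z p : X) (t : ℝ) : Prop :=
  ∃ γ : GeoSeg X x z, ∃ s ∈ Set.Icc (0:ℝ) (dist x z), dist (γ.toFun s) p ≤ t

/-- Condition (*) with constants `N, M`: `G·B(x₀,N) = X`, `G·B(y₀,M) = Y`, and for all
`g, a ∈ G`, if `[x₀, g x₀] ∩ B(a x₀, N) ≠ ∅` in `X` then `[y₀, g y₀] ∩ B(a y₀, M) ≠ ∅`
in `Y`. -/
def CondStar (G : Type*) {X Y : Type*} [Group G] [MetricSpace X] [MetricSpace Y]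
    [MulAction G X] [MulAction G Y] (x₀ : X) (y₀ : Y) (N M : ℝ) : Prop :=
  0 < N ∧ 0 < M ∧
  (⋃ g : G, g • Metric.closedBall x₀ N) = Set.univ ∧
  (⋃ g : G, g • Metric.closedBall y₀ M) = Set.univ ∧
  ∀ g a : G, SegMeetsBall x₀ (g • x₀) (a • x₀) N → SegMeetsBall y₀ (g • y₀) (a • y₀) M

/-- `lam, C` are quasi-isometry constants for the orbit map `g x₀ ↦ g y₀`:
`(1/λ) d_Y(g y₀, h y₀) − C ≤ d_X(g x₀, h x₀) ≤ λ d_Y(g y₀, h y₀) + C`. -/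
def QIconsts (G : Type*) {X Y : Type*} [Group G] [MetricSpace X] [MetricSpace Y]
    [MulAction G X] [MulAction G Y] (x₀ : X) (y₀ : Y) (lam C : ℝ) : Prop :=
  0 < lam ∧ 0 < C ∧ ∀ g h : G,
    (1 / lam) * dist (g • y₀) (h • y₀) - C ≤ dist (g • x₀) (h • x₀) ∧
    dist (g • x₀) (h • x₀) ≤ lam * dist (g • y₀) (h • y₀) + C

/-!
Geodesics issuing from a point of a CAT(0) space diverge at most linearly, so two of them
that are close at a large radius are as close as we like at a fixed smaller radius. Take
the geodesics from `x₀` to `g_{i₀} x₀` and `g_i x₀`, which are `1`-close at a large radius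
`r`, and orbit points `a x₀`, `a' x₀` within `N` of them there. Condition (*) puts `a y₀`,
`a' y₀` within `M` of the geodesics from `y₀` to `g_{i₀} y₀` and `g_i y₀`, at distance about
`r / λ` from `y₀`, and the quasi-isometry bounds `d(a y₀, a' y₀)`. Convexity in `Y` shrinks
this bounded gap below any `ε > 0` at radius `R`, in particular below `λ(2N+1) + 2M + C`.
-/

theorem EuclideanSpace.exists_norm_eq_norm_eq_dist_eq {T D : ℝ} (hD : 0 ≤ D) (hDT : D ≤ 2 * T) :
    ∃ y z : EuclideanSpace ℝ (Fin 2), ‖y‖ = T ∧ ‖z‖ = T ∧ dist y z = D := by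
  have hT : 0 ≤ T := by linarith
  have hh : 0 ≤ T ^ 2 - (D / 2) ^ 2 := by nlinarith
  set h := √(T ^ 2 - (D / 2) ^ 2)
  have hsq : h ^ 2 = T ^ 2 - (D / 2) ^ 2 := Real.sq_sqrt hh
  refine ⟨!₂[D / 2, h], !₂[-(D / 2), h], ?_, ?_, ?_⟩
  · rw [EuclideanSpace.norm_eq, ← Real.sqrt_sq hT]
    congr 1
    simp [Fin.sum_univ_two, hsq]
  · rw [EuclideanSpace.norm_eq, ← Real.sqrt_sq hT]
    congr 1
    simp [Fin.sum_univ_two, hsq]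
  · rw [EuclideanSpace.dist_eq]
    simp [Fin.sum_univ_two, Real.dist_eq, Real.sqrt_sq hD]

namespace GeoSeg

variable {X : Type*} [MetricSpace X] {x u : X}

theorem dist_source_toFun (γ : GeoSeg X x u) {t : ℝ} (ht : t ∈ Icc 0 (dist x u)) :
    dist x (γ.toFun t) = t := by
  have h := γ.isom ⟨le_rfl, dist_nonneg⟩ ht
  rwa [γ.source, zero_sub, abs_neg, abs_of_nonneg ht.1] at h

noncomputable def restrict (γ : GeoSeg X x u) {T : ℝ} (hT : T ∈ Icc 0 (dist x u)) :
    GeoSeg X x (γ.toFun T) where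
  toFun := γ.toFun
  source := γ.source
  target := by rw [γ.dist_source_toFun hT]
  isom s hs t ht := by
    rw [γ.dist_source_toFun hT] at hs ht
    exact γ.isom ⟨hs.1, hs.2.trans hT.2⟩ ⟨ht.1, ht.2.trans hT.2⟩

theorem dist_toFun_le_two_mul_dist {v : X} (γ : GeoSeg X x u) (δ : GeoSeg X x v)
    {s s' : ℝ} (hs : s ∈ Icc 0 (dist x u)) (hs' : s' ∈ Icc 0 (dist x v)) (hss' : s ≤ s') :
    dist (γ.toFun s) (δ.toFun s) ≤ 2 * dist (γ.toFun s) (δ.toFun s') := by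
  have hs's : s ∈ Icc 0 (dist x v) := ⟨hs.1, hss'.trans hs'.2⟩
  have hδ : dist (δ.toFun s') (δ.toFun s) = s' - s := by
    rw [δ.isom hs' hs's, abs_of_nonneg (by linarith)]
  have hgap : s' - s ≤ dist (γ.toFun s) (δ.toFun s') := by
    have := dist_triangle x (γ.toFun s) (δ.toFun s')
    rw [γ.dist_source_toFun hs, δ.dist_source_toFun hs'] at this
    linarith
  linarith [dist_triangle (γ.toFun s) (δ.toFun s') (δ.toFun s)]

theorem dist_toFun_min_le_two_mul_dist {v : X} (γ : GeoSeg X x u) (δ : GeoSeg X x v)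
    {s s' : ℝ} (hs : s ∈ Icc 0 (dist x u)) (hs' : s' ∈ Icc 0 (dist x v)) :
    dist (γ.toFun (min s s')) (δ.toFun (min s s')) ≤ 2 * dist (γ.toFun s) (δ.toFun s') := by
  rcases le_total s s' with h | h
  · rw [min_eq_left h]
    exact γ.dist_toFun_le_two_mul_dist δ hs hs' h
  · rw [min_eq_right h, dist_comm, dist_comm (γ.toFun s)]
    exact δ.dist_toFun_le_two_mul_dist γ hs' hs h

end GeoSeg

namespace IsCAT0

variable {X : Type*} [MetricSpace X] {x u v : X}

theorem dist_toFun_le_of_dist_eq (hX : IsCAT0 X) (γ : GeoSeg X x u) (δ : GeoSeg X x v)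
    (huv : dist x u = dist x v) {t : ℝ} (ht : t ∈ Icc 0 (dist x u)) :
    dist (γ.toFun t) (δ.toFun t) ≤ t / dist x u * dist u v := by
  have hDT : dist u v ≤ 2 * dist x u := by
    linarith [dist_triangle_left u v x]
  obtain ⟨y', z', hy', hz', hyz'⟩ :=
    EuclideanSpace.exists_norm_eq_norm_eq_dist_eq dist_nonneg hDT
  have key := hX.2 x u v γ δ 0 y' z' (by rwa [dist_zero_left]) (by rwa [dist_zero_left, ← huv])
    hyz' ht (huv ▸ ht)
  have hcomp : ∀ w : EuclideanSpace ℝ (Fin 2), euclPt 0 w t = (t / ‖w‖) • w := by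
    intro w
    simp [euclPt]
  rwa [hcomp, hcomp, hy', hz', dist_smul₀, Real.norm_eq_abs,
    abs_of_nonneg (div_nonneg ht.1 dist_nonneg), hyz'] at key

theorem dist_toFun_le (hX : IsCAT0 X) (γ : GeoSeg X x u) (δ : GeoSeg X x v) {s t : ℝ}
    (hsu : s ≤ dist x u) (hsv : s ≤ dist x v) (ht : t ∈ Icc 0 s) :
    dist (γ.toFun t) (δ.toFun t) ≤ t / s * dist (γ.toFun s) (δ.toFun s) := by
  have hsu' : s ∈ Icc 0 (dist x u) := ⟨ht.1.trans ht.2, hsu⟩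
  have hsv' : s ∈ Icc 0 (dist x v) := ⟨ht.1.trans ht.2, hsv⟩
  have h := hX.dist_toFun_le_of_dist_eq (γ.restrict hsu') (δ.restrict hsv')
    (by rw [γ.dist_source_toFun hsu', δ.dist_source_toFun hsv'])
    (by rwa [γ.dist_source_toFun hsu'])
  rwa [γ.dist_source_toFun hsu'] at h

theorem toFun_eq (hX : IsCAT0 X) (γ δ : GeoSeg X x u) {t : ℝ} (ht : t ∈ Icc 0 (dist x u)) :
    γ.toFun t = δ.toFun t := by
  have h := hX.dist_toFun_le_of_dist_eq γ δ rfl ht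
  rwa [dist_self, mul_zero, dist_le_zero] at h

theorem memUpt_of_dist_le (hX : IsCAT0 X) (η : GeoSeg X x u) (ζ : GeoSeg X x v)
    {s s' R ε : ℝ} (hs : s ∈ Icc 0 (dist x u)) (hs' : s' ∈ Icc 0 (dist x v)) (hR : 0 ≤ R)
    (hRs : R < min s s') (hε : 2 * dist (η.toFun s) (ζ.toFun s') * R < ε * min s s') :
    memUpt x u R ε v := by
  set m := min s s'
  have hm : 0 < m := hR.trans_lt hRs
  have hmu : m ≤ dist x u := (min_le_left s s').trans hs.2
  have hmv : m ≤ dist x v := (min_le_right s s').trans hs'.2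
  refine ⟨hRs.trans_le hmv, fun γz γ => ?_⟩
  rw [hX.toFun_eq γz η ⟨hR, hRs.le.trans hmu⟩, hX.toFun_eq γ ζ ⟨hR, hRs.le.trans hmv⟩]
  calc dist (η.toFun R) (ζ.toFun R)
      ≤ R / m * dist (η.toFun m) (ζ.toFun m) := hX.dist_toFun_le η ζ hmu hmv ⟨hR, hRs.le⟩
    _ ≤ R / m * (2 * dist (η.toFun s) (ζ.toFun s')) := by
        gcongr
        exact η.dist_toFun_min_le_two_mul_dist ζ hs hs'
    _ < ε := by
        rw [div_mul_eq_mul_div, div_lt_iff₀ hm]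
        linarith

theorem memUpt_of_le {z w : X} (hX : IsCAT0 X) {r s ε : ℝ} (hzs : s ≤ dist x z)
    (h : memUpt x z s ε w) (hr : 0 < r) (hrs : r ≤ s) : memUpt x z r (r / s * ε) w :=
  ⟨hrs.trans_lt h.1, fun γz γ =>
    (hX.dist_toFun_le γz γ hzs h.1.le ⟨hr.le, hrs⟩).trans_lt
      (mul_lt_mul_of_pos_left (h.2 γz γ) (div_pos hr (hr.trans_le hrs)))⟩

end IsCAT0

theorem ConeCauchy.forall_pos {X : Type*} [MetricSpace X] (hX : IsCAT0 X) {x₀ : X}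
    {x : ℕ → X} (h : ConeCauchy x₀ x) :
    ∀ ε > 0, ∀ r > 0, ∃ i₀ : ℕ, ∀ i ≥ i₀, memUpt x₀ (x i₀) r ε (x i) := by
  obtain ⟨ε₀, hε₀, hx⟩ := h
  intro ε hε r hr
  have hrs : r ≤ r * (ε₀ / ε + 1) := le_mul_of_one_le_right hr.le (by
    have : 0 ≤ ε₀ / ε := by positivity
    linarith)
  obtain ⟨i₀, hi₀⟩ := hx _ (hr.trans_le hrs)
  refine ⟨i₀, fun i hi => ?_⟩
  have h := hX.memUpt_of_le (hi₀ i₀ le_rfl).1.le (hi₀ i hi) hr hrs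
  refine ⟨h.1, fun γz γ => (h.2 γz γ).trans_le ?_⟩
  rw [div_mul_eq_mul_div, div_le_iff₀ (by positivity)]
  field_simp
  nlinarith

section OrbitTransfer

variable {G X Y : Type*} [Group G] [MetricSpace X] [MetricSpace Y] [MulAction G X]
  [MulAction G Y] {x₀ : X} {y₀ : Y}

theorem exists_dist_smul_le (hiso : ∀ g : G, Isometry fun x : X => g • x) {N : ℝ}
    (hcov : ⋃ g : G, g • closedBall x₀ N = univ) (p : X) : ∃ a : G, dist p (a • x₀) ≤ N := by
  obtain ⟨a, b, hb, rfl⟩ := mem_iUnion.mp (hcov.symm ▸ mem_univ p)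
  exact ⟨a, (hiso a).dist_eq b x₀ ▸ mem_closedBall.mp hb⟩

theorem QIconsts.dist_smul_le {lam C : ℝ} (hqi : QIconsts G x₀ y₀ lam C) (a b : G) :
    dist (a • y₀) (b • y₀) ≤ lam * (dist (a • x₀) (b • x₀) + C) := by
  have h := mul_le_mul_of_nonneg_left (hqi.2.2 a b).1 hqi.1.le
  rw [mul_sub, ← mul_assoc, mul_one_div_cancel hqi.1.ne', one_mul] at h
  linarith

theorem CondStar.exists_near_smul (hiso : ∀ g : G, Isometry fun x : X => g • x) {N M lam C : ℝ}
    (hstar : CondStar G x₀ y₀ N M) (hqi : QIconsts G x₀ y₀ lam C) (g : G)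
    (ξ : GeoSeg X x₀ (g • x₀)) {r : ℝ} (hr : r ∈ Icc 0 (dist x₀ (g • x₀))) :
    ∃ a : G, ∃ η : GeoSeg Y y₀ (g • y₀), ∃ s ∈ Icc 0 (dist y₀ (g • y₀)),
      dist (ξ.toFun r) (a • x₀) ≤ N ∧ dist (η.toFun s) (a • y₀) ≤ M ∧
        r ≤ lam * (s + M) + N + C := by
  obtain ⟨a, haξ⟩ := exists_dist_smul_le hiso hstar.2.2.1 (ξ.toFun r)
  obtain ⟨η, s, hs, haη⟩ := hstar.2.2.2.2 g a ⟨ξ, r, hr, haξ⟩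
  refine ⟨a, η, s, hs, haξ, haη, ?_⟩
  have hx : dist x₀ (a • x₀) ≤ lam * dist y₀ (a • y₀) + C := by
    simpa only [one_smul] using (hqi.2.2 1 a).2
  have hy : dist y₀ (a • y₀) ≤ s + M := by
    linarith [dist_triangle y₀ (η.toFun s) (a • y₀), η.dist_source_toFun hs]
  have hr' : r ≤ dist x₀ (a • x₀) + N := by
    linarith [dist_triangle_right x₀ (ξ.toFun r) (a • x₀), ξ.dist_source_toFun hr]
  nlinarith [hqi.1]

theorem CondStar.forall_pos_memUpt (hX : IsCAT0 X) (hY : IsCAT0 Y)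
    (hiso : ∀ g : G, Isometry fun x : X => g • x) {N M lam C : ℝ}
    (hstar : CondStar G x₀ y₀ N M) (hqi : QIconsts G x₀ y₀ lam C) {g : ℕ → G}
    (hc : ConeCauchy x₀ fun i => g i • x₀) :
    ∀ ε > 0, ∀ R > 0, ∃ i₀ : ℕ, ∀ i ≥ i₀, memUpt y₀ (g i₀ • y₀) R ε (g i • y₀) := by
  obtain ⟨hN, hM, -⟩ := id hstar
  obtain ⟨hlam, hC, -⟩ := id hqi
  intro ε hε R hR
  set E := 2 * M + lam * (2 * N + 1 + C)
  set T := R + 2 * E * R / ε + 1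
  have hRT : R < T := by
    have : 0 ≤ 2 * E * R / ε := by positivity
    linarith
  have hεT : ε * T = ε * R + 2 * E * R + ε := by
    simp only [T]
    field_simp
  -- at radius `r` in `X`, condition (*) produces points of the `Y`-geodesics beyond radius `T`
  set r := lam * (T + M) + N + C
  have hr : 0 < r := by positivity
  obtain ⟨i₀, hi₀⟩ := hc.forall_pos hX 1 one_pos r hr
  refine ⟨i₀, fun i hi => ?_⟩
  obtain ⟨ξ₀⟩ := hX.1 x₀ (g i₀ • x₀)
  obtain ⟨ξ⟩ := hX.1 x₀ (g i • x₀)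
  have hclose : dist (ξ₀.toFun r) (ξ.toFun r) < 1 := (hi₀ i hi).2 ξ₀ ξ
  obtain ⟨a, η, s, hs, haξ, haη, hrs⟩ :=
    hstar.exists_near_smul hiso hqi _ ξ₀ ⟨hr.le, (hi₀ i₀ le_rfl).1.le⟩
  obtain ⟨a', ζ, s', hs', ha'ξ, ha'ζ, hrs'⟩ :=
    hstar.exists_near_smul hiso hqi _ ξ ⟨hr.le, (hi₀ i hi).1.le⟩
  have hXaa' : dist (a • x₀) (a' • x₀) ≤ 2 * N + 1 := by
    linarith [dist_triangle4 (a • x₀) (ξ₀.toFun r) (ξ.toFun r) (a' • x₀),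
      dist_comm (a • x₀) (ξ₀.toFun r)]
  have hYaa' : dist (a • y₀) (a' • y₀) ≤ lam * (2 * N + 1 + C) :=
    (hqi.dist_smul_le a a').trans (by gcongr)
  have hE : dist (η.toFun s) (ζ.toFun s') ≤ E := by
    linarith [dist_triangle4 (η.toFun s) (a • y₀) (a' • y₀) (ζ.toFun s'),
      dist_comm (a' • y₀) (ζ.toFun s')]
  have hTs : T ≤ min s s' := le_min
    (le_of_mul_le_mul_left (by linarith) hlam) (le_of_mul_le_mul_left (by linarith) hlam)
  refine hY.memUpt_of_dist_le η ζ hs hs' hR.le (by linarith) ?_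
  calc 2 * dist (η.toFun s) (ζ.toFun s') * R ≤ 2 * E * R := by gcongr
    _ < ε * T := by linarith [mul_pos hε hR]
    _ ≤ ε * min s s' := by gcongr

end OrbitTransfer

theorem stmt2_general {G X Y : Type*} [Group G] [MetricSpace X] [MetricSpace Y]
    [MulAction G X] [MulAction G Y]
    (hX : IsCAT0 X) (hY : IsCAT0 Y)
    (hGX : GeometricAction G X)
    (x₀ : X) (y₀ : Y) (N M : ℝ) (hstar : CondStar G x₀ y₀ N M)
    (lam C : ℝ) (hqi : QIconsts G x₀ y₀ lam C)
    (g : ℕ → G) (hc : ConeCauchy x₀ (fun i => g i • x₀)) :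
    ConeCauchy y₀ (fun i => g i • y₀) ∧
      ∀ R > (0:ℝ), ∃ i₀ : ℕ, ∀ i ≥ i₀,
        memUpt y₀ (g i₀ • y₀) R (lam * (2 * N + 1) + 2 * M + C) (g i • y₀) := by
  obtain ⟨hN, hM, -⟩ := id hstar
  obtain ⟨hlam, hC, -⟩ := id hqi
  have hM' : 0 < lam * (2 * N + 1) + 2 * M + C := by positivity
  have h := hstar.forall_pos_memUpt hX hY hGX.1 hqi hc _ hM'
  exact ⟨⟨_, hM', h⟩, h⟩

/-- Under condition (*), if `{g_i x₀}` is a Cauchy sequence in `X ∪ ∂X`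
then `{g_i y₀}` is a Cauchy sequence in `Y ∪ ∂Y`; in fact, with quasi-isometry constants
`λ, C`, one may take `M' = λ(2N+1) + 2M + C`: for any `R > 0` there is `i₀` with
`g_i y₀ ∈ U(g_{i₀} y₀; R, M')` for all `i ≥ i₀`. -/
theorem stmt2 {G X Y : Type*} [Group G] [MetricSpace X] [MetricSpace Y]
    [MulAction G X] [MulAction G Y]
    (hX : IsCAT0 X) (hY : IsCAT0 Y)
    (hGX : GeometricAction G X) (hGY : GeometricAction G Y)
    (x₀ : X) (y₀ : Y) (N M : ℝ) (hstar : CondStar G x₀ y₀ N M)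
    (lam C : ℝ) (hqi : QIconsts G x₀ y₀ lam C)
    (g : ℕ → G) (hc : ConeCauchy x₀ (fun i => g i • x₀)) :
    ConeCauchy y₀ (fun i => g i • y₀) ∧
      ∀ R > (0:ℝ), ∃ i₀ : ℕ, ∀ i ≥ i₀,
        memUpt y₀ (g i₀ • y₀) R (lam * (2 * N + 1) + 2 * M + C) (g i • y₀) :=
  stmt2_general hX hY hGX x₀ y₀ N M hstar lam C hqi g hc
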